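/- arXiv:2503.14885 — 2 statements merged into one kernel-verified Lean document; each statement's English description precedes it below -/
import Mathlib

section
/- Let n₁, n₂ > 1, let β' ≥ 0 and α' > 0, and let 1 < p < ∞ with conjugate exponent p'. Define, for measurable E ⊆ [1,∞), the function R₂χ_E(x) = x^{−α'} ∫_{E ∩ [1,x]} y^{−β'} y^{n₁−1} dy for x ≥ 1. Suppose either (i) β' > 0, β'p' ≥ n₁, and q ≥ n₂/α', or (ii) β'p' < n₁, α' + β' − n₁/p' > 0, and q ≥ n₂/(α' + β' − n₁/p'). Then there exists a constant C > 0 such that for every measurable E ⊆ [1,∞) with μ_{n₁}(E) < ∞ and every s > 0, μ_{n₂}({x ∈ [1,∞) : R₂χ_E(x) > s}) ≤ (C μ_{n₁}(E)^{1/p} / s)^q. (That is, R₂ is of restricted weak type (p,q), i.e. bounded from L^{p,1}([1,∞), μ_{n₁}) to L^{q,∞}([1,∞), μ_{n₂}).) -/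
/-!
In both cases the theorem follows from a pointwise estimate
`∫_{E ∩ [1,x]} y^{-β'} dμ_{n₁}(y) ≤ C μ_{n₁}(E)^{1/p} x^e`, with `e = 0` in case (i) and
`e = n₁/p' - β'` in case (ii). On `[1,x]` we have `y^{-β'} ≤ x^e y^{-n₁/p'}`, and since
`y^{-n₁/p'}` is decreasing, its `μ_{n₁}`-integral over `E` is largest when `E` is replaced by the
interval `[1,R]` of the same measure (bathtub principle). That integral is explicit and at most
`(p/n₁) (n₁ μ_{n₁}(E))^{1/p}`. The estimate confines the superlevel set `{R₂χ_E > s}` to an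
interval `[1,T]` with `T^{α'-e} = C μ_{n₁}(E)^{1/p} / s`, and then
`μ_{n₂}([1,T]) ≤ T^{n₂} ≤ (T^{α'-e})^q`.
-/

open MeasureTheory Set

/-- The measure on `[1,∞)` with density `r ^ (n-1)` with respect to Lebesgue measure. -/
noncomputable def mu (n : ℝ) : Measure ℝ :=
  (volume.restrict (Ici (1 : ℝ))).withDensity fun r => ENNReal.ofReal (r ^ (n - 1))

lemma continuousOn_rpow_Icc_one (t x : ℝ) : ContinuousOn (fun y : ℝ => y ^ t) (Icc 1 x) :=
  continuousOn_id.rpow_const fun _ hy => Or.inl (zero_lt_one.trans_le hy.1).ne'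

lemma integral_Icc_one_rpow_sub_one {t R : ℝ} (ht : 0 < t) (hR : 1 ≤ R) :
    ∫ y in Icc 1 R, y ^ (t - 1) = (R ^ t - 1) / t := by
  rw [integral_Icc_eq_integral_Ioc, ← intervalIntegral.integral_of_le hR,
    integral_rpow (Or.inl (by linarith)), sub_add_cancel, Real.one_rpow]

lemma mu_apply (n : ℝ) {S : Set ℝ} (hS : MeasurableSet S) (hS1 : S ⊆ Ici 1) :
    mu n S = ∫⁻ y in S, ENNReal.ofReal (y ^ (n - 1)) := by
  rw [mu, withDensity_apply _ hS, Measure.restrict_restrict hS, inter_eq_self_of_subset_left hS1]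

lemma mu_restrict (n : ℝ) {S : Set ℝ} (hS1 : S ⊆ Ici 1) :
    (mu n).restrict S = (volume.restrict S).withDensity fun r => ENNReal.ofReal (r ^ (n - 1)) := by
  rw [mu, restrict_withDensity' S, Measure.restrict_restrict' measurableSet_Ici,
    inter_eq_self_of_subset_left hS1]

lemma setIntegral_mu (n : ℝ) (f : ℝ → ℝ) {S : Set ℝ} (hS : MeasurableSet S) (hS1 : S ⊆ Ici 1) :
    ∫ y in S, f y ∂mu n = ∫ y in S, f y * y ^ (n - 1) := by
  have hdensity : (fun r : ℝ => ENNReal.ofReal (r ^ (n - 1))) =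
      fun r => ((r ^ (n - 1)).toNNReal : ENNReal) := rfl
  rw [mu_restrict n hS1, hdensity, integral_withDensity_eq_integral_smul (by fun_prop)]
  refine setIntegral_congr_fun hS fun y hy => ?_
  rw [NNReal.smul_def, smul_eq_mul, mul_comm,
    Real.coe_toNNReal _ (Real.rpow_nonneg (zero_le_one.trans (hS1 hy)) _)]

lemma mu_Icc {n R : ℝ} (hn : 0 < n) (hR : 1 ≤ R) :
    mu n (Icc 1 R) = ENNReal.ofReal ((R ^ n - 1) / n) := by
  rw [mu_apply n measurableSet_Icc Icc_subset_Ici_self, ← integral_Icc_one_rpow_sub_one hn hR,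
    ofReal_integral_eq_lintegral_ofReal]
  · exact (continuousOn_rpow_Icc_one _ R).integrableOn_Icc
  · exact (ae_restrict_iff' measurableSet_Icc).mpr (ae_of_all _ fun y hy =>
      Real.rpow_nonneg (by linarith [hy.1]) _)

lemma mu_Icc_le_rpow {n T : ℝ} (hn : 1 ≤ n) (hT : 1 ≤ T) :
    mu n (Icc 1 T) ≤ ENNReal.ofReal (T ^ n) := by
  rw [mu_Icc (by linarith) hT]
  refine ENNReal.ofReal_le_ofReal ((div_le_iff₀ (by linarith)).mpr ?_)
  nlinarith [Real.one_le_rpow hT (by linarith : (0:ℝ) ≤ n)]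

theorem setIntegral_le_setIntegral_Icc_of_antitoneOn {ν : Measure ℝ} {g : ℝ → ℝ} {a R : ℝ}
    {S : Set ℝ} (haR : a ≤ R) (hS : MeasurableSet S) (hSa : S ⊆ Ici a)
    (hg : AntitoneOn g (Ici a)) (hgS : IntegrableOn g S ν) (hgR : IntegrableOn g (Icc a R) ν)
    (hν : ν S = ν (Icc a R)) (hνR : ν (Icc a R) ≠ ⊤) :
    ∫ y in S, g y ∂ν ≤ ∫ y in Icc a R, g y ∂ν := by
  -- Compare `g` with the constant `g R`: the excess over it lives in `[a, R]`, the deficit beyond.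
  have hsplit : ∀ T, IntegrableOn g T ν → ν T ≠ ⊤ →
      ∫ y in T, g y ∂ν = ∫ y in T, (g y - g R) ∂ν + ν.real T * g R := fun T hgT hT => by
    rw [integral_sub hgT (integrableOn_const hT), setIntegral_const, smul_eq_mul]
    ring
  have hR : R ∈ Ici a := haR
  have hexcess : ∫ y in S \ Icc a R, (g y - g R) ∂ν ≤ 0 :=
    setIntegral_nonpos (hS.diff measurableSet_Icc) fun y ⟨hyS, hyR⟩ =>
      sub_nonpos.mpr (hg hR (hSa hyS) (not_lt.mp fun hy => hyR ⟨hSa hyS, hy.le⟩))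
  have hdeficit : ∫ y in S ∩ Icc a R, (g y - g R) ∂ν ≤ ∫ y in Icc a R, (g y - g R) ∂ν :=
    setIntegral_mono_set (hgR.sub (integrableOn_const hνR))
      ((ae_restrict_iff' measurableSet_Icc).mpr
        (ae_of_all _ fun y hy => sub_nonneg.mpr (hg hy.1 hR hy.2)))
      inter_subset_right.eventuallyLE
  have hparts := integral_inter_add_sdiff (f := fun y => g y - g R)
    (measurableSet_Icc (a := a) (b := R)) (hgS.sub (integrableOn_const (hν ▸ hνR)))
  rw [hsplit S hgS (hν ▸ hνR), hsplit _ hgR hνR, measureReal_def, measureReal_def, hν]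
  linarith

lemma integrableOn_mu_rpow_of_nonpos {n t : ℝ} (ht : t ≤ 0) {S : Set ℝ} (hS : MeasurableSet S)
    (hS1 : S ⊆ Ici 1) (hfin : mu n S ≠ ⊤) : IntegrableOn (fun y : ℝ => y ^ t) S (mu n) :=
  Measure.integrableOn_of_bounded hfin
    (by fun_prop : Measurable fun y : ℝ => y ^ t).aestronglyMeasurable (M := 1) <| (ae_restrict_iff' hS).mpr <| ae_of_all _ fun y hy => by
      rw [Real.norm_of_nonneg (Real.rpow_nonneg (zero_le_one.trans (hS1 hy)) _)]
      exact Real.rpow_le_one_of_one_le_of_nonpos (hS1 hy) ht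

lemma setIntegral_mu_rpow_le {n p : ℝ} (hn : 0 < n) (hp : 1 < p) {E : Set ℝ}
    (hE : MeasurableSet E) (hE1 : E ⊆ Ici 1) (hfin : mu n E ≠ ⊤) :
    ∫ y in E, y ^ (n / p - n) ∂mu n ≤ p / n * n ^ (1 / p) * (mu n E).toReal ^ (1 / p) := by
  have hp0 : 0 < p := zero_lt_one.trans hp
  have hexp : n / p - n ≤ 0 := by
    rw [sub_nonpos, div_le_iff₀ hp0]; nlinarith
  set M := (mu n E).toReal
  have hM : 0 ≤ M := ENNReal.toReal_nonneg
  set R := (1 + n * M) ^ (1 / n)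
  have hR : 1 ≤ R := Real.one_le_rpow (by nlinarith) (by positivity)
  have hRpow : ∀ u, R ^ (n * u) = (1 + n * M) ^ u := fun u => by
    rw [← Real.rpow_mul (by positivity), one_div, inv_mul_cancel_left₀ hn.ne']
  have hmuR : mu n (Icc 1 R) = mu n E := by
    rw [mu_Icc hn hR, ← mul_one n, hRpow, Real.rpow_one, mul_one, add_sub_cancel_left,
      mul_div_cancel_left₀ _ hn.ne', ENNReal.ofReal_toReal hfin]
  have hantitone : AntitoneOn (fun y : ℝ => y ^ (n / p - n)) (Ici 1) :=
    (Real.antitoneOn_rpow_Ioi_of_exponent_nonpos hexp).mono (Ici_subset_Ioi.mpr zero_lt_one)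
  calc ∫ y in E, y ^ (n / p - n) ∂mu n
      ≤ ∫ y in Icc 1 R, y ^ (n / p - n) ∂mu n :=
        setIntegral_le_setIntegral_Icc_of_antitoneOn hR hE hE1 hantitone
          (integrableOn_mu_rpow_of_nonpos hexp hE hE1 hfin)
          (integrableOn_mu_rpow_of_nonpos hexp measurableSet_Icc Icc_subset_Ici_self (hmuR ▸ hfin))
          hmuR.symm (hmuR ▸ hfin)
    _ = ∫ y in Icc 1 R, y ^ (n / p - 1) := by
        rw [setIntegral_mu n _ measurableSet_Icc Icc_subset_Ici_self]
        refine setIntegral_congr_fun measurableSet_Icc fun y hy => ?_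
        rw [← Real.rpow_add (zero_lt_one.trans_le hy.1)]
        ring_nf
    _ = ((1 + n * M) ^ (1 / p) - 1) * (p / n) := by
        rw [integral_Icc_one_rpow_sub_one (by positivity) hR, div_div_eq_mul_div, mul_div_assoc,
          ← hRpow, mul_one_div]
    _ ≤ (n * M) ^ (1 / p) * (p / n) := by
        gcongr
        have := Real.rpow_add_le_add_rpow zero_le_one (by positivity : 0 ≤ n * M)
          (by positivity : (0:ℝ) ≤ 1 / p) (by rw [div_le_one hp0]; exact hp.le)
        rw [Real.one_rpow] at this
        linarith
    _ = p / n * n ^ (1 / p) * M ^ (1 / p) := by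
        rw [Real.mul_rpow hn.le hM]; ring

lemma setIntegral_inter_Icc_le {n p β e x : ℝ} (hn : 0 < n) (hp : 1 < p) (he : 0 ≤ e)
    (hβe : n - n / p - β ≤ e) {E : Set ℝ} (hE : MeasurableSet E) (hE1 : E ⊆ Ici 1)
    (hfin : mu n E ≠ ⊤) (hx : 1 ≤ x) :
    ∫ y in E ∩ Icc 1 x, y ^ (-β) * y ^ (n - 1) ≤
      p / n * n ^ (1 / p) * (mu n E).toReal ^ (1 / p) * x ^ e := by
  have hp0 : 0 < p := zero_lt_one.trans hp
  have hexp : n / p - n ≤ 0 := by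
    rw [sub_nonpos, div_le_iff₀ hp0]; nlinarith
  have hEx : MeasurableSet (E ∩ Icc 1 x) := hE.inter measurableSet_Icc
  have hpointwise : ∀ y ∈ E ∩ Icc 1 x,
      y ^ (-β) * y ^ (n - 1) ≤ x ^ e * y ^ (n / p - n) * y ^ (n - 1) :=
    fun y ⟨_, hy1, hyx⟩ => by
      gcongr
      calc y ^ (-β) ≤ y ^ (e + (n / p - n)) := Real.rpow_le_rpow_of_exponent_le hy1 (by linarith)
        _ = y ^ e * y ^ (n / p - n) := Real.rpow_add (zero_lt_one.trans_le hy1) _ _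
        _ ≤ x ^ e * y ^ (n / p - n) := by gcongr
  calc ∫ y in E ∩ Icc 1 x, y ^ (-β) * y ^ (n - 1)
      ≤ ∫ y in E ∩ Icc 1 x, x ^ e * y ^ (n / p - n) * y ^ (n - 1) :=
        setIntegral_mono_on
          (((continuousOn_rpow_Icc_one _ x).mul
            (continuousOn_rpow_Icc_one _ x)).integrableOn_Icc.mono_set inter_subset_right)
          (((continuousOn_const.mul (continuousOn_rpow_Icc_one _ x)).mul
            (continuousOn_rpow_Icc_one _ x)).integrableOn_Icc.mono_set inter_subset_right)
          hEx hpointwise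
    _ = x ^ e * ∫ y in E ∩ Icc 1 x, y ^ (n / p - n) ∂mu n := by
        rw [setIntegral_mu n _ hEx (inter_subset_left.trans hE1), ← integral_const_mul]
        simp only [mul_assoc]
    _ ≤ x ^ e * ∫ y in E, y ^ (n / p - n) ∂mu n := by
        refine mul_le_mul_of_nonneg_left ?_ (by positivity)
        exact setIntegral_mono_set (integrableOn_mu_rpow_of_nonpos hexp hE hE1 hfin)
          ((ae_restrict_iff' hE).mpr (ae_of_all _ fun y hy =>
            Real.rpow_nonneg (zero_le_one.trans (hE1 hy)) _))
          inter_subset_left.eventuallyLE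
    _ ≤ x ^ e * (p / n * n ^ (1 / p) * (mu n E).toReal ^ (1 / p)) := by
        gcongr
        exact setIntegral_mu_rpow_le hn hp hE hE1 hfin
    _ = _ := mul_comm _ _

lemma mu_setOf_lt_le_of_le_mul_rpow {n α e q A s : ℝ} (hn : 1 ≤ n) (heα : e < α)
    (hq : n / (α - e) ≤ q) (hA : 0 ≤ A) (hs : 0 < s) {f : ℝ → ℝ}
    (hf : ∀ x, 1 ≤ x → f x ≤ A * x ^ e) :
    mu n {x | x ∈ Ici 1 ∧ s < x ^ (-α) * f x} ≤ ENNReal.ofReal (A / s) ^ q := by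
  have hδ : 0 < α - e := sub_pos.mpr heα
  have hsub : {x | x ∈ Ici 1 ∧ s < x ^ (-α) * f x} ⊆ Icc 1 ((A / s) ^ (α - e)⁻¹) := by
    rintro x ⟨hx1, hlevel⟩
    have hx0 : 0 < x := zero_lt_one.trans_le hx1
    have hdecay : s < A * x ^ (-(α - e)) := calc
      s < x ^ (-α) * f x := hlevel
      _ ≤ x ^ (-α) * (A * x ^ e) := by gcongr; exact hf x hx1
      _ = A * x ^ (-(α - e)) := by
          rw [mul_left_comm, ← Real.rpow_add hx0]; ring_nf
    rw [Real.rpow_neg hx0.le, ← div_eq_mul_inv, lt_div_iff₀ (by positivity), mul_comm,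
      ← lt_div_iff₀ hs] at hdecay
    exact ⟨hx1, ((Real.lt_rpow_inv_iff_of_pos hx0.le (by positivity) hδ).mpr hdecay).le⟩
  rcases lt_or_ge (A / s) 1 with hsmall | hlarge
  · have hempty : Icc 1 ((A / s) ^ (α - e)⁻¹) = ∅ :=
      Icc_eq_empty_of_lt (Real.rpow_lt_one (by positivity) hsmall (inv_pos.mpr hδ))
    rw [hempty, subset_empty_iff] at hsub
    rw [hsub, measure_empty]
    exact zero_le
  calc mu n {x | x ∈ Ici 1 ∧ s < x ^ (-α) * f x}
      ≤ mu n (Icc 1 ((A / s) ^ (α - e)⁻¹)) := measure_mono hsub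
    _ ≤ ENNReal.ofReal (((A / s) ^ (α - e)⁻¹) ^ n) :=
        mu_Icc_le_rpow hn (Real.one_le_rpow hlarge (inv_nonneg.mpr hδ.le))
    _ ≤ ENNReal.ofReal ((A / s) ^ q) := by
        rw [← Real.rpow_mul (by positivity), inv_mul_eq_div]
        exact ENNReal.ofReal_le_ofReal (Real.rpow_le_rpow_of_exponent_le hlarge hq)
    _ = ENNReal.ofReal (A / s) ^ q :=
        (ENNReal.ofReal_rpow_of_nonneg (by positivity)
          ((div_pos (by linarith) hδ).le.trans hq)).symm

theorem R2_restricted_weak_type_general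
    (n₁ n₂ α' β' p p' q : ℝ)
    (hn₁ : 1 < n₁) (hn₂ : 1 < n₂)
    (hα' : 0 < α')
    (hp : 1 < p) (hconj : 1 / p + 1 / p' = 1)
    (hcase : (0 < β' ∧ n₁ ≤ β' * p' ∧ n₂ / α' ≤ q) ∨
             (β' * p' < n₁ ∧ 0 < α' + β' - n₁ / p' ∧ n₂ / (α' + β' - n₁ / p') ≤ q)) :
    ∃ C > 0, ∀ E : Set ℝ, MeasurableSet E → E ⊆ Ici (1 : ℝ) → mu n₁ E < ⊤ →
      ∀ s > 0,
        mu n₂ {x | x ∈ Ici (1 : ℝ) ∧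
            s < x ^ (-α') * ∫ y in E ∩ Icc 1 x, y ^ (-β') * y ^ (n₁ - 1)} ≤
          (ENNReal.ofReal C * (mu n₁ E) ^ (1 / p) / ENNReal.ofReal s) ^ q := by
  have hn₁0 : 0 < n₁ := zero_lt_one.trans hn₁
  have hp0 : 0 < p := zero_lt_one.trans hp
  have hp'0 : 0 < p' := one_div_pos.mp (by linarith [(div_lt_one hp0).mpr hp])
  have hn₁p' : n₁ / p' = n₁ - n₁ / p := by
    rw [div_eq_mul_one_div, show 1 / p' = 1 - 1 / p by linarith]
    ring
  obtain ⟨e, he, hβe, heα, hq⟩ :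
      ∃ e, 0 ≤ e ∧ n₁ - n₁ / p - β' ≤ e ∧ e < α' ∧ n₂ / (α' - e) ≤ q := by
    rcases hcase with ⟨-, hβ, hq⟩ | ⟨hβ, hδ, hq⟩
    · have := (div_le_iff₀ hp'0).mpr hβ
      exact ⟨0, le_rfl, by linarith, hα', by rwa [sub_zero]⟩
    · have := (lt_div_iff₀ hp'0).mpr hβ
      exact ⟨n₁ / p' - β', by linarith, by linarith, by linarith, by rwa [sub_sub_eq_add_sub]⟩
  refine ⟨p / n₁ * n₁ ^ (1 / p), by positivity, fun E hE hE1 hfin s hs => ?_⟩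
  calc _ ≤ ENNReal.ofReal (p / n₁ * n₁ ^ (1 / p) * (mu n₁ E).toReal ^ (1 / p) / s) ^ q :=
        mu_setOf_lt_le_of_le_mul_rpow hn₂.le heα hq (by positivity) hs fun x hx =>
          setIntegral_inter_Icc_le hn₁0 hp he hβe hE hE1 hfin.ne hx
    _ = _ := by
        rw [ENNReal.ofReal_div_of_pos hs, ENNReal.ofReal_mul (by positivity),
          ← ENNReal.ofReal_rpow_of_nonneg ENNReal.toReal_nonneg (by positivity),
          ENNReal.ofReal_toReal hfin.ne]

/-- The operator `R₂ χ_E (x) = x^{-α'} ∫_{E ∩ [1,x]} y^{-β'} y^{n₁-1} dy` is of restricted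
weak type `(p,q)` from `([1,∞), μ_{n₁})` to `([1,∞), μ_{n₂})`, under either of the two
exponent conditions (`β'p' ≥ n₁` and `q ≥ n₂/α'`, or `β'p' < n₁` and
`q ≥ n₂/(α'+β'-n₁/p')`). -/
theorem R2_restricted_weak_type
    (n₁ n₂ α' β' p p' q : ℝ)
    (hn₁ : 1 < n₁) (hn₂ : 1 < n₂)
    (hβ' : 0 ≤ β') (hα' : 0 < α')
    (hp : 1 < p) (hconj : 1 / p + 1 / p' = 1)
    (hcase : (0 < β' ∧ n₁ ≤ β' * p' ∧ n₂ / α' ≤ q) ∨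
             (β' * p' < n₁ ∧ 0 < α' + β' - n₁ / p' ∧ n₂ / (α' + β' - n₁ / p') ≤ q)) :
    ∃ C > 0, ∀ E : Set ℝ, MeasurableSet E → E ⊆ Ici (1 : ℝ) → mu n₁ E < ⊤ →
      ∀ s > 0,
        mu n₂ {x | x ∈ Ici (1 : ℝ) ∧
            s < x ^ (-α') * ∫ y in E ∩ Icc 1 x, y ^ (-β') * y ^ (n₁ - 1)} ≤
          (ENNReal.ofReal C * (mu n₁ E) ^ (1 / p) / ENNReal.ofReal s) ^ q :=
  R2_restricted_weak_type_general n₁ n₂ α' β' p p' q hn₁ hn₂ hα' hp hconj hcase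
end

section
/- Let 1 < d₁ < 2 < d₂. Consider the integral operator T f(x) = ∫₁^∞ K(x,y) f(y) y^{d₂−1} dy with kernel K(x,y) = x^{1−d₂} y^{d₁−d₂−1} for 1 ≤ x ≤ y and K(x,y) = x^{d₁−d₂−2} y^{2−d₂} for x > y ≥ 1. Then for every p with 1 < p < d₂/(d₁−1) there exists a constant C > 0 such that ‖Tf‖_{L^p([1,∞), μ_{d₂})} ≤ C ‖f‖_{L^p([1,∞), μ_{d₂})} for all f ∈ L^p([1,∞), μ_{d₂}). -/
/-!
Schur's test with the power weight `w(x) = x^(-t/q)`, `q` the exponent conjugate to `p`: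
Hölder's inequality in `y` for each fixed `x`, followed by Tonelli, bounds `‖T f‖_p` by
`A^(1/q) B^(1/p) ‖f‖_p` as soon as `∫ K(x,y) y^(-t) dμ(y) ≤ A x^(-t)` and
`∫ K(x,y) x^(-t(p-1)) dμ(x) ≤ B y^(-t(p-1))`. Splitting each integral at the diagonal leaves
explicit power integrals over `[1, x]` and `(x, ∞)`, which have the required decay when
`d₁ - 1 < t < d₂ - d₁ + 2` and `d₁ - 2 < t(p-1) < d₂ - d₁ + 1`; such a `t` exists because
`p (d₁ - 1) < d₂`.
-/

open MeasureTheory Set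

open Function

open scoped ENNReal

lemma setLIntegral_Ioi_rpow {c a : ℝ} (hc : 0 < c) (ha : a < -1) :
    ∫⁻ y in Ioi c, ENNReal.ofReal (y ^ a) = ENNReal.ofReal (-c ^ (a + 1) / (a + 1)) := by
  rw [← integral_Ioi_rpow_of_lt ha hc, ofReal_integral_eq_lintegral_ofReal
    (integrableOn_Ioi_rpow_of_lt ha hc)]
  filter_upwards [ae_restrict_mem measurableSet_Ioi] with y hy
  exact Real.rpow_nonneg (hc.trans hy).le a

lemma setLIntegral_Ioc_zero_rpow {x e : ℝ} (hx : 0 ≤ x) (he : -1 < e) :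
    ∫⁻ y in Ioc 0 x, ENNReal.ofReal (y ^ e) = ENNReal.ofReal (x ^ (e + 1) / (e + 1)) := by
  have hint : IntegrableOn (fun y : ℝ => y ^ e) (Ioc 0 x) :=
    (intervalIntegrable_iff_integrableOn_Ioc_of_le hx).1
      (intervalIntegral.intervalIntegrable_rpow' he)
  rw [← ofReal_integral_eq_lintegral_ofReal hint, ← intervalIntegral.integral_of_le hx,
    integral_rpow (Or.inl he), Real.zero_rpow (by linarith), sub_zero]
  filter_upwards [ae_restrict_mem measurableSet_Ioc] with y hy
  exact Real.rpow_nonneg hy.1.le e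

lemma setLIntegral_Ioi_mul_rpow_le {x c e a : ℝ} (hx : 1 ≤ x) (he : e < -1)
    (hcea : c + e + 1 ≤ a) :
    ∫⁻ y in Ioi x, ENNReal.ofReal (x ^ c * y ^ e) ≤ ENNReal.ofReal (x ^ a / -(e + 1)) := by
  have hx0 : 0 < x := by linarith
  calc ∫⁻ y in Ioi x, ENNReal.ofReal (x ^ c * y ^ e)
      = ENNReal.ofReal (x ^ c) * ∫⁻ y in Ioi x, ENNReal.ofReal (y ^ e) := by
        simp_rw [ENNReal.ofReal_mul (Real.rpow_nonneg hx0.le c)]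
        exact lintegral_const_mul' _ _ ENNReal.ofReal_ne_top
    _ = ENNReal.ofReal (x ^ (c + e + 1) / -(e + 1)) := by
        rw [setLIntegral_Ioi_rpow hx0 he, ← ENNReal.ofReal_mul (by positivity), add_assoc,
          Real.rpow_add hx0 c, div_neg]
        ring_nf
    _ ≤ ENNReal.ofReal (x ^ a / -(e + 1)) := by
        gcongr
        linarith

lemma setLIntegral_Icc_mul_rpow_le {x c e a : ℝ} (hx : 1 ≤ x) (hca : c < a)
    (hcea : c + e + 1 ≤ a) :
    ∫⁻ y in Icc 1 x, ENNReal.ofReal (x ^ c * y ^ e) ≤ ENNReal.ofReal (x ^ a / (a - c)) := by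
  have hx0 : 0 < x := by linarith
  calc ∫⁻ y in Icc 1 x, ENNReal.ofReal (x ^ c * y ^ e)
      ≤ ∫⁻ y in Icc 1 x, ENNReal.ofReal (x ^ c) * ENNReal.ofReal (y ^ (a - c - 1)) := by
        refine setLIntegral_mono' measurableSet_Icc fun y hy => ?_
        rw [← ENNReal.ofReal_mul (by positivity)]
        gcongr
        exacts [hy.1, by linarith]
    _ ≤ ENNReal.ofReal (x ^ c) * ∫⁻ y in Ioc 0 x, ENNReal.ofReal (y ^ (a - c - 1)) := by
        rw [lintegral_const_mul' _ _ ENNReal.ofReal_ne_top]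
        exact mul_le_mul_right (lintegral_mono_set (Icc_subset_Ioc zero_lt_one le_rfl)) _
    _ = ENNReal.ofReal (x ^ a / (a - c)) := by
        rw [setLIntegral_Ioc_zero_rpow hx0.le (by linarith),
          ← ENNReal.ofReal_mul (by positivity), sub_add_cancel, ← mul_div_assoc,
          ← Real.rpow_add hx0, add_sub_cancel]

section Schur

variable {α : Type*} [MeasurableSpace α] {μ : Measure α} {p q : ℝ}

lemma rpow_lintegral_mul_le_of_holderConjugate (hpq : p.HolderConjugate q)
    {k F w : α → ℝ≥0∞} (hk : Measurable k) (hF : AEMeasurable F μ)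
    (hw : AEMeasurable w μ)
    (hw₀ : ∀ᵐ y ∂μ, w y ≠ 0) (hw_top : ∀ᵐ y ∂μ, w y ≠ ∞) :
    (∫⁻ y, k y * F y ∂μ) ^ p ≤
      (∫⁻ y, k y * (F y / w y) ^ p ∂μ) * (∫⁻ y, k y * w y ^ q ∂μ) ^ (p / q) := by
  set ν := μ.withDensity k
  have hν : ν ≪ μ := withDensity_absolutelyContinuous μ k
  have hk_mul {g : α → ℝ≥0∞} (hg : AEMeasurable g μ) :
      ∫⁻ y, k y * g y ∂μ = ∫⁻ y, g y ∂ν :=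
    (lintegral_withDensity_eq_lintegral_mul₀ hk.aemeasurable hg).symm
  have hFw : F =ᵐ[ν] (fun y => F y / w y) * w := hν.ae_le <| by
    filter_upwards [hw₀, hw_top] with y h₀ h_top
    exact (ENNReal.div_mul_cancel h₀ h_top).symm
  have holder :=
    ENNReal.lintegral_mul_le_Lp_mul_Lq ν hpq ((hF.div hw).mono_ac hν) (hw.mono_ac hν)
  rw [hk_mul hF, hk_mul (g := fun y => (F y / w y) ^ p) ((hF.div hw).pow_const p),
    hk_mul (g := fun y => w y ^ q) (hw.pow_const q), lintegral_congr_ae hFw]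
  calc (∫⁻ y, ((fun y => F y / w y) * w) y ∂ν) ^ p
      ≤ ((∫⁻ y, (F y / w y) ^ p ∂ν) ^ (1 / p) * (∫⁻ y, w y ^ q ∂ν) ^ (1 / q)) ^ p :=
        ENNReal.rpow_le_rpow holder hpq.nonneg
    _ = (∫⁻ y, (F y / w y) ^ p ∂ν) * (∫⁻ y, w y ^ q ∂ν) ^ (p / q) := by
        rw [ENNReal.mul_rpow_of_nonneg _ _ hpq.nonneg, ← ENNReal.rpow_mul,
          ← ENNReal.rpow_mul, one_div_mul_cancel hpq.ne_zero, ENNReal.rpow_one,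
          one_div_mul_eq_div]

variable [SFinite μ] {K : α → α → ℝ≥0∞} {w F : α → ℝ≥0∞} {A B : ℝ≥0∞}

theorem lintegral_rpow_lintegral_le_of_schur (hpq : p.HolderConjugate q)
    (hK : Measurable (uncurry K)) (hw : Measurable w)
    (hw₀ : ∀ᵐ x ∂μ, w x ≠ 0) (hw_top : ∀ᵐ x ∂μ, w x ≠ ∞)
    (h₁ : ∀ᵐ x ∂μ, ∫⁻ y, K x y * w y ^ q ∂μ ≤ A * w x ^ q)
    (h₂ : ∀ᵐ y ∂μ, ∫⁻ x, K x y * w x ^ p ∂μ ≤ B * w y ^ p) (hF : Measurable F) :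
    ∫⁻ x, (∫⁻ y, K x y * F y ∂μ) ^ p ∂μ ≤
      A ^ (p / q) * B * ∫⁻ y, F y ^ p ∂μ := by
  have hG : Measurable fun y => (F y / w y) ^ p := (hF.div hw).pow_const p
  have hpointwise : ∀ᵐ x ∂μ, (∫⁻ y, K x y * F y ∂μ) ^ p ≤
      A ^ (p / q) * (w x ^ p * ∫⁻ y, K x y * (F y / w y) ^ p ∂μ) := by
    filter_upwards [h₁] with x hx
    calc (∫⁻ y, K x y * F y ∂μ) ^ p
        ≤ (∫⁻ y, K x y * (F y / w y) ^ p ∂μ) *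
            (∫⁻ y, K x y * w y ^ q ∂μ) ^ (p / q) :=
          rpow_lintegral_mul_le_of_holderConjugate hpq (hK.comp measurable_prodMk_left)
            hF.aemeasurable hw.aemeasurable hw₀ hw_top
      _ ≤ (∫⁻ y, K x y * (F y / w y) ^ p ∂μ) * (A * w x ^ q) ^ (p / q) := by
          gcongr
          exact div_nonneg hpq.nonneg hpq.symm.nonneg
      _ = A ^ (p / q) * (w x ^ p * ∫⁻ y, K x y * (F y / w y) ^ p ∂μ) := by
          rw [ENNReal.mul_rpow_of_nonneg _ _ (div_nonneg hpq.nonneg hpq.symm.nonneg),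
            ← ENNReal.rpow_mul, mul_div_cancel₀ _ hpq.symm.ne_zero]
          ring
  have hswap : ∫⁻ x, w x ^ p * ∫⁻ y, K x y * (F y / w y) ^ p ∂μ ∂μ =
      ∫⁻ y, (F y / w y) ^ p * ∫⁻ x, K x y * w x ^ p ∂μ ∂μ := by
    calc ∫⁻ x, w x ^ p * ∫⁻ y, K x y * (F y / w y) ^ p ∂μ ∂μ
        = ∫⁻ x, ∫⁻ y, (F y / w y) ^ p * (K x y * w x ^ p) ∂μ ∂μ := by
          refine lintegral_congr fun x => ?_
          rw [← lintegral_const_mul (f := fun y => K x y * (F y / w y) ^ p) _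
            ((hK.comp measurable_prodMk_left).mul hG)]
          exact lintegral_congr fun y => by ring
      _ = ∫⁻ y, ∫⁻ x, (F y / w y) ^ p * (K x y * w x ^ p) ∂μ ∂μ :=
          lintegral_lintegral_swap ((hG.comp measurable_snd).mul
            (hK.mul ((hw.pow_const p).comp measurable_fst))).aemeasurable
      _ = ∫⁻ y, (F y / w y) ^ p * ∫⁻ x, K x y * w x ^ p ∂μ ∂μ :=
          lintegral_congr fun y => lintegral_const_mul _
            ((hK.comp measurable_prodMk_right).mul (hw.pow_const p))
  calc ∫⁻ x, (∫⁻ y, K x y * F y ∂μ) ^ p ∂μ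
      ≤ ∫⁻ x, A ^ (p / q) * (w x ^ p * ∫⁻ y, K x y * (F y / w y) ^ p ∂μ) ∂μ :=
        lintegral_mono_ae hpointwise
    _ = A ^ (p / q) * ∫⁻ y, (F y / w y) ^ p * ∫⁻ x, K x y * w x ^ p ∂μ ∂μ := by
        rw [lintegral_const_mul (f := fun x => w x ^ p * ∫⁻ y, K x y * (F y / w y) ^ p ∂μ) _
          ((hw.pow_const p).mul (Measurable.lintegral_prod_right
            (f := fun x y => K x y * (F y / w y) ^ p) (hK.mul (hG.comp measurable_snd)))),
          hswap]
    _ ≤ A ^ (p / q) * ∫⁻ y, B * F y ^ p ∂μ := by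
        gcongr A ^ (p / q) * ?_
        refine lintegral_mono_ae ?_
        filter_upwards [h₂, hw₀, hw_top] with y hy h₀ h_top
        calc (F y / w y) ^ p * ∫⁻ x, K x y * w x ^ p ∂μ
            ≤ (F y / w y) ^ p * (B * w y ^ p) := by gcongr
          _ = B * (F y / w y * w y) ^ p := by
              rw [ENNReal.mul_rpow_of_nonneg _ _ hpq.nonneg]
              ring
          _ = B * F y ^ p := by rw [ENNReal.div_mul_cancel h₀ h_top]
    _ = A ^ (p / q) * B * ∫⁻ y, F y ^ p ∂μ := by
        rw [lintegral_const_mul _ (hF.pow_const p), mul_assoc]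

theorem eLpNorm_lintegral_le_of_schur (hpq : p.HolderConjugate q)
    (hK : Measurable (uncurry K)) (hw : Measurable w)
    (hw₀ : ∀ᵐ x ∂μ, w x ≠ 0) (hw_top : ∀ᵐ x ∂μ, w x ≠ ∞)
    (h₁ : ∀ᵐ x ∂μ, ∫⁻ y, K x y * w y ^ q ∂μ ≤ A * w x ^ q)
    (h₂ : ∀ᵐ y ∂μ, ∫⁻ x, K x y * w x ^ p ∂μ ≤ B * w y ^ p)
    (hF : AEMeasurable F μ) :
    eLpNorm (fun x => ∫⁻ y, K x y * F y ∂μ) (ENNReal.ofReal p) μ ≤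
      A ^ (1 / q) * B ^ (1 / p) * eLpNorm F (ENNReal.ofReal p) μ := by
  have hp₀ : ENNReal.ofReal p ≠ 0 := ENNReal.ofReal_ne_zero_iff.2 hpq.pos
  have hKF : (fun x => ∫⁻ y, K x y * F y ∂μ) = fun x => ∫⁻ y, K x y * hF.mk F y ∂μ :=
    funext fun x => lintegral_congr_ae (hF.ae_eq_mk.mono fun y hy => congrArg (K x y * ·) hy)
  rw [hKF, eLpNorm_congr_ae hF.ae_eq_mk,
    eLpNorm_eq_lintegral_rpow_enorm_toReal hp₀ ENNReal.ofReal_ne_top,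
    eLpNorm_eq_lintegral_rpow_enorm_toReal hp₀ ENNReal.ofReal_ne_top,
    ENNReal.toReal_ofReal hpq.nonneg]
  simp only [enorm_eq_self]
  calc (∫⁻ x, (∫⁻ y, K x y * hF.mk F y ∂μ) ^ p ∂μ) ^ (1 / p)
      ≤ (A ^ (p / q) * B * ∫⁻ y, hF.mk F y ^ p ∂μ) ^ (1 / p) :=
        ENNReal.rpow_le_rpow (lintegral_rpow_lintegral_le_of_schur hpq hK hw hw₀ hw_top h₁ h₂
          hF.measurable_mk) (one_div_nonneg.2 hpq.nonneg)
    _ = A ^ (1 / q) * B ^ (1 / p) * (∫⁻ y, hF.mk F y ^ p ∂μ) ^ (1 / p) := by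
        rw [ENNReal.mul_rpow_of_nonneg _ _ (one_div_nonneg.2 hpq.nonneg),
          ENNReal.mul_rpow_of_nonneg _ _ (one_div_nonneg.2 hpq.nonneg), ← ENNReal.rpow_mul,
          div_mul_div_comm, mul_one, mul_comm q, ← div_div, div_self hpq.ne_zero]

end Schur

instance (n : ℝ) : SFinite (mu n) := by
  unfold mu
  infer_instance

lemma lintegral_mu (n : ℝ) (g : ℝ → ℝ≥0∞) :
    ∫⁻ y, g y ∂mu n = ∫⁻ y in Ici 1, ENNReal.ofReal (y ^ (n - 1)) * g y :=
  lintegral_withDensity_eq_lintegral_mul_non_measurable _ (by fun_prop)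
    (ae_of_all _ fun _ => ENNReal.ofReal_lt_top) g

lemma ae_one_le_mu (n : ℝ) : ∀ᵐ x ∂mu n, 1 ≤ x :=
  (withDensity_absolutelyContinuous _ _).ae_le (ae_restrict_mem measurableSet_Ici)

lemma enorm_setIntegral_Ici_le_lintegral_mu (n : ℝ) (g : ℝ → ℝ) :
    ‖∫ y in Ici (1 : ℝ), g y * y ^ (n - 1)‖ₑ ≤ ∫⁻ y, ‖g y‖ₑ ∂mu n := by
  rw [lintegral_mu]
  refine (enorm_integral_le_lintegral_enorm _).trans_eq
    (setLIntegral_congr_fun measurableSet_Ici fun y hy => ?_)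
  rw [enorm_mul, Real.enorm_eq_ofReal (Real.rpow_nonneg (zero_le_one.trans hy) _), mul_comm]

lemma ofReal_rpow_mul_enorm_mul_rpow {y k a b : ℝ} (hy : 0 < y) (hk : 0 ≤ k) :
    ENNReal.ofReal (y ^ a) * (‖k‖ₑ * ENNReal.ofReal y ^ b) =
      ENNReal.ofReal (k * y ^ (a + b)) := by
  rw [Real.enorm_eq_ofReal hk, ENNReal.ofReal_rpow_of_pos hy, ← ENNReal.ofReal_mul hk,
    ← ENNReal.ofReal_mul (by positivity), Real.rpow_add hy]
  ring_nf

noncomputable def i1Kernel (d₁ d₂ x y : ℝ) : ℝ :=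
  if x ≤ y then x ^ (1 - d₂) * y ^ (d₁ - d₂ - 1) else x ^ (d₁ - d₂ - 2) * y ^ (2 - d₂)

section Kernel

variable {d₁ d₂ x y : ℝ}

lemma i1Kernel_nonneg (hx : 0 < x) (hy : 0 < y) : 0 ≤ i1Kernel d₁ d₂ x y := by
  unfold i1Kernel
  split_ifs <;> positivity

lemma measurable_i1Kernel (d₁ d₂ : ℝ) : Measurable (uncurry (i1Kernel d₁ d₂)) :=
  Measurable.ite (measurableSet_le measurable_fst measurable_snd) (by fun_prop) (by fun_prop)

lemma lintegral_enorm_i1Kernel_mul_rpow_le_left {t : ℝ} (hd : d₁ ≤ d₂)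
    (ht₁ : d₁ - 1 < t) (ht₂ : t < d₂ - d₁ + 2) (hx : 1 ≤ x) :
    ∫⁻ y, ‖i1Kernel d₁ d₂ x y‖ₑ * ENNReal.ofReal y ^ (-t) ∂mu d₂ ≤
      ENNReal.ofReal (1 / (d₂ - d₁ + 2 - t) + 1 / (t + 1 - d₁)) *
        ENNReal.ofReal x ^ (-t) := by
  have hx₀ : 0 < x := by linarith
  have hc₁ : 0 < 1 / (d₂ - d₁ + 2 - t) := one_div_pos.2 (by linarith)
  have hc₂ : 0 < 1 / (t + 1 - d₁) := one_div_pos.2 (by linarith)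
  have hK {y : ℝ} (hy : 1 ≤ y) : ENNReal.ofReal (y ^ (d₂ - 1)) *
      (‖i1Kernel d₁ d₂ x y‖ₑ * ENNReal.ofReal y ^ (-t)) =
      ENNReal.ofReal (i1Kernel d₁ d₂ x y * y ^ (d₂ - 1 - t)) := by
    rw [ofReal_rpow_mul_enorm_mul_rpow (by linarith) (i1Kernel_nonneg hx₀ (by linarith)),
      ← sub_eq_add_neg]
  rw [lintegral_mu, setLIntegral_congr_fun measurableSet_Ici fun y hy => hK hy,
    ← Ico_union_Ici_eq_Ici hx,
    lintegral_union measurableSet_Ici ((Iio_disjoint_Ici le_rfl).mono_left Ico_subset_Iio_self),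
    ENNReal.ofReal_rpow_of_pos hx₀, ← ENNReal.ofReal_mul (add_pos hc₁ hc₂).le, add_mul,
    ENNReal.ofReal_add (by positivity) (by positivity)]
  gcongr ?_ + ?_
  · calc ∫⁻ y in Ico 1 x, ENNReal.ofReal (i1Kernel d₁ d₂ x y * y ^ (d₂ - 1 - t))
        = ∫⁻ y in Ico 1 x, ENNReal.ofReal (x ^ (d₁ - d₂ - 2) * y ^ (1 - t)) := by
          refine setLIntegral_congr_fun measurableSet_Ico fun y hy => ?_
          rw [i1Kernel, if_neg (not_le.2 hy.2), mul_assoc,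
            ← Real.rpow_add (by linarith [hy.1])]
          ring_nf
      _ ≤ ∫⁻ y in Icc 1 x, ENNReal.ofReal (x ^ (d₁ - d₂ - 2) * y ^ (1 - t)) :=
          lintegral_mono_set Ico_subset_Icc_self
      _ ≤ ENNReal.ofReal (x ^ (-t) / (-t - (d₁ - d₂ - 2))) :=
          setLIntegral_Icc_mul_rpow_le hx (by linarith) (by linarith)
      _ = ENNReal.ofReal (1 / (d₂ - d₁ + 2 - t) * x ^ (-t)) := by ring_nf
  · calc ∫⁻ y in Ici x, ENNReal.ofReal (i1Kernel d₁ d₂ x y * y ^ (d₂ - 1 - t))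
        = ∫⁻ y in Ioi x, ENNReal.ofReal (x ^ (1 - d₂) * y ^ (d₁ - 2 - t)) := by
          rw [← setLIntegral_congr Ioi_ae_eq_Ici]
          refine setLIntegral_congr_fun measurableSet_Ioi fun y hy => ?_
          rw [i1Kernel, if_pos hy.le, mul_assoc, ← Real.rpow_add (hx₀.trans hy)]
          ring_nf
      _ ≤ ENNReal.ofReal (x ^ (-t) / -(d₁ - 2 - t + 1)) :=
          setLIntegral_Ioi_mul_rpow_le hx (by linarith) (by linarith)
      _ = ENNReal.ofReal (1 / (t + 1 - d₁) * x ^ (-t)) := by ring_nf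

lemma lintegral_enorm_i1Kernel_mul_rpow_le_right {u : ℝ} (hd : d₁ ≤ d₂)
    (hu₁ : d₁ - 2 < u) (hu₂ : u < d₂ - d₁ + 1) (hy : 1 ≤ y) :
    ∫⁻ x, ‖i1Kernel d₁ d₂ x y‖ₑ * ENNReal.ofReal x ^ (-u) ∂mu d₂ ≤
      ENNReal.ofReal (1 / (d₂ - d₁ + 1 - u) + 1 / (u + 2 - d₁)) *
        ENNReal.ofReal y ^ (-u) := by
  have hy₀ : 0 < y := by linarith
  have hc₁ : 0 < 1 / (d₂ - d₁ + 1 - u) := one_div_pos.2 (by linarith)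
  have hc₂ : 0 < 1 / (u + 2 - d₁) := one_div_pos.2 (by linarith)
  have hK {x : ℝ} (hx : 1 ≤ x) : ENNReal.ofReal (x ^ (d₂ - 1)) *
      (‖i1Kernel d₁ d₂ x y‖ₑ * ENNReal.ofReal x ^ (-u)) =
      ENNReal.ofReal (i1Kernel d₁ d₂ x y * x ^ (d₂ - 1 - u)) := by
    rw [ofReal_rpow_mul_enorm_mul_rpow (by linarith) (i1Kernel_nonneg (by linarith) hy₀),
      ← sub_eq_add_neg]
  rw [lintegral_mu, setLIntegral_congr_fun measurableSet_Ici fun x hx => hK hx,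
    ← Icc_union_Ioi_eq_Ici hy,
    lintegral_union measurableSet_Ioi ((Iic_disjoint_Ioi le_rfl).mono_left Icc_subset_Iic_self),
    ENNReal.ofReal_rpow_of_pos hy₀, ← ENNReal.ofReal_mul (add_pos hc₁ hc₂).le, add_mul,
    ENNReal.ofReal_add (by positivity) (by positivity)]
  gcongr ?_ + ?_
  · calc ∫⁻ x in Icc 1 y, ENNReal.ofReal (i1Kernel d₁ d₂ x y * x ^ (d₂ - 1 - u))
        = ∫⁻ x in Icc 1 y, ENNReal.ofReal (y ^ (d₁ - d₂ - 1) * x ^ (-u)) := by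
          refine setLIntegral_congr_fun measurableSet_Icc fun x hx => ?_
          rw [i1Kernel, if_pos hx.2, mul_comm (x ^ _), mul_assoc,
            ← Real.rpow_add (by linarith [hx.1])]
          ring_nf
      _ ≤ ENNReal.ofReal (y ^ (-u) / (-u - (d₁ - d₂ - 1))) :=
          setLIntegral_Icc_mul_rpow_le hy (by linarith) (by linarith)
      _ = ENNReal.ofReal (1 / (d₂ - d₁ + 1 - u) * y ^ (-u)) := by ring_nf
  · calc ∫⁻ x in Ioi y, ENNReal.ofReal (i1Kernel d₁ d₂ x y * x ^ (d₂ - 1 - u))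
        = ∫⁻ x in Ioi y, ENNReal.ofReal (y ^ (2 - d₂) * x ^ (d₁ - 3 - u)) := by
          refine setLIntegral_congr_fun measurableSet_Ioi fun x hx => ?_
          rw [i1Kernel, if_neg (not_le.2 hx), mul_comm (x ^ _), mul_assoc,
            ← Real.rpow_add (hy₀.trans hx)]
          ring_nf
      _ ≤ ENNReal.ofReal (y ^ (-u) / -(d₁ - 3 - u + 1)) :=
          setLIntegral_Ioi_mul_rpow_le hy (by linarith) (by linarith)
      _ = ENNReal.ofReal (1 / (u + 2 - d₁) * y ^ (-u)) := by ring_nf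

end Kernel

lemma ae_ofReal_rpow_ne_zero_mu (n s : ℝ) : ∀ᵐ x ∂mu n, ENNReal.ofReal x ^ s ≠ 0 := by
  filter_upwards [ae_one_le_mu n] with x hx
  exact (ENNReal.rpow_pos (ENNReal.ofReal_pos.2 (by linarith)) ENNReal.ofReal_ne_top).ne'

lemma ae_ofReal_rpow_ne_top_mu (n s : ℝ) : ∀ᵐ x ∂mu n, ENNReal.ofReal x ^ s ≠ ∞ := by
  filter_upwards [ae_one_le_mu n] with x hx
  exact ENNReal.rpow_ne_top_of_ne_zero (ENNReal.ofReal_pos.2 (by linarith)).ne'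
    ENNReal.ofReal_ne_top

lemma exists_i1Kernel_schur_exponent {d₁ d₂ p : ℝ} (hd₁2 : d₁ < 2) (hd : d₁ ≤ d₂)
    (hp : 1 < p) (hpd : p * (d₁ - 1) < d₂) :
    ∃ t, d₁ - 1 < t ∧ t < d₂ - d₁ + 2 ∧ t * (p - 1) < d₂ - d₁ + 1 := by
  have hp₁ : 0 < p - 1 := by linarith
  obtain ⟨t, ht₁, ht₂⟩ := exists_between <| lt_min
    (show d₁ - 1 < d₂ - d₁ + 2 by linarith)
    ((lt_div_iff₀ hp₁).2 (by nlinarith) : d₁ - 1 < (d₂ - d₁ + 1) / (p - 1))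
  exact ⟨t, ht₁, ht₂.trans_le (min_le_left _ _),
    (lt_div_iff₀ hp₁).1 (ht₂.trans_le (min_le_right _ _))⟩

lemma exists_eLpNorm_lintegral_enorm_i1Kernel_le {d₁ d₂ p : ℝ} (hd₁ : 1 < d₁)
    (hd₁2 : d₁ < 2) (hd : d₁ ≤ d₂) (hp : 1 < p) (hpd : p * (d₁ - 1) < d₂) :
    ∃ C > 0, ∀ F : ℝ → ℝ≥0∞, AEMeasurable F (mu d₂) →
      eLpNorm (fun x => ∫⁻ y, ‖i1Kernel d₁ d₂ x y‖ₑ * F y ∂mu d₂) (.ofReal p) (mu d₂)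
        ≤ .ofReal C * eLpNorm F (.ofReal p) (mu d₂) := by
  obtain ⟨t, ht₁, ht₂, ht₃⟩ := exists_i1Kernel_schur_exponent hd₁2 hd hp hpd
  set q := p / (p - 1)
  have hpq : p.HolderConjugate q := .conjExponent hp
  -- `w ^ q` and `w ^ p` are the powers `x ^ (-t)` and `x ^ (-t * (p - 1))`
  set w : ℝ → ℝ≥0∞ := fun x => ENNReal.ofReal x ^ (-(t / q))
  obtain ⟨a, ha, h₁⟩ : ∃ a > 0, ∀ᵐ x ∂mu d₂,
      ∫⁻ y, ‖i1Kernel d₁ d₂ x y‖ₑ * w y ^ q ∂mu d₂ ≤ .ofReal a * w x ^ q := by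
    refine ⟨1 / (d₂ - d₁ + 2 - t) + 1 / (t + 1 - d₁),
      add_pos (one_div_pos.2 (by linarith)) (one_div_pos.2 (by linarith)), ?_⟩
    filter_upwards [ae_one_le_mu d₂] with x hx
    simp only [w, ← ENNReal.rpow_mul, neg_mul, div_mul_cancel₀ t hpq.symm.ne_zero]
    exact lintegral_enorm_i1Kernel_mul_rpow_le_left hd ht₁ ht₂ hx
  obtain ⟨b, hb, h₂⟩ : ∃ b > 0, ∀ᵐ y ∂mu d₂,
      ∫⁻ x, ‖i1Kernel d₁ d₂ x y‖ₑ * w x ^ p ∂mu d₂ ≤ .ofReal b * w y ^ p := by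
    refine ⟨1 / (d₂ - d₁ + 1 - t * (p - 1)) + 1 / (t * (p - 1) + 2 - d₁),
      add_pos (one_div_pos.2 (by linarith)) (one_div_pos.2 (by nlinarith)), ?_⟩
    filter_upwards [ae_one_le_mu d₂] with y hy
    have htp : t / q * p = t * (p - 1) := by
      simp only [q]
      field_simp
    simp only [w, ← ENNReal.rpow_mul, neg_mul, htp]
    exact lintegral_enorm_i1Kernel_mul_rpow_le_right hd (by nlinarith) ht₃ hy
  refine ⟨a ^ (1 / q) * b ^ (1 / p), by positivity, fun F hF => ?_⟩
  rw [ENNReal.ofReal_mul (by positivity), ← ENNReal.ofReal_rpow_of_pos ha,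
    ← ENNReal.ofReal_rpow_of_pos hb]
  exact eLpNorm_lintegral_le_of_schur hpq (measurable_i1Kernel d₁ d₂).enorm (by fun_prop)
    (ae_ofReal_rpow_ne_zero_mu d₂ _) (ae_ofReal_rpow_ne_top_mu d₂ _) h₁ h₂ hF

/-- For `1 < d₁ < 2 < d₂`, the integral operator with kernel
`K(x,y) = x^{1-d₂} y^{d₁-d₂-1}` for `x ≤ y` and `x^{d₁-d₂-2} y^{2-d₂}` for `x > y`
is bounded on `L^p([1,∞), μ_{d₂})` for `1 < p < d₂/(d₁-1)`. -/
theorem I1_Lp_bounded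
    (d₁ d₂ p : ℝ) (hd₁ : 1 < d₁) (hd₁2 : d₁ < 2) (hd₂ : 2 < d₂)
    (hp1 : 1 < p) (hp2 : p < d₂ / (d₁ - 1)) :
    ∃ C > 0, ∀ f : ℝ → ℝ, MemLp f (ENNReal.ofReal p) (mu d₂) →
      eLpNorm (fun x => ∫ y in Ici (1 : ℝ),
          (if x ≤ y then x ^ (1 - d₂) * y ^ (d₁ - d₂ - 1) else x ^ (d₁ - d₂ - 2) * y ^ (2 - d₂))
            * f y * y ^ (d₂ - 1))
        (ENNReal.ofReal p) (mu d₂) ≤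
      ENNReal.ofReal C * eLpNorm f (ENNReal.ofReal p) (mu d₂) := by
  obtain ⟨C, hC, hbound⟩ :=
    exists_eLpNorm_lintegral_enorm_i1Kernel_le hd₁ hd₁2 (by linarith) hp1
      ((lt_div_iff₀ (by linarith)).1 hp2)
  refine ⟨C, hC, fun f hf => ?_⟩
  calc _ ≤ eLpNorm (fun x => ∫⁻ y, ‖i1Kernel d₁ d₂ x y‖ₑ * ‖f y‖ₑ ∂mu d₂)
        (ENNReal.ofReal p) (mu d₂) :=
        eLpNorm_mono_enorm fun x => by
          rw [enorm_eq_self]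
          exact (enorm_setIntegral_Ici_le_lintegral_mu d₂
            fun y => i1Kernel d₁ d₂ x y * f y).trans_eq (by simp only [enorm_mul])
    _ ≤ ENNReal.ofReal C * eLpNorm f (ENNReal.ofReal p) (mu d₂) := by
        simpa only [eLpNorm_enorm] using hbound _ hf.1.enorm
end
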